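/- arXiv:1503.06944 — 3 statements merged into one kernel-verified Lean document; each statement's English description precedes it below -/
import Mathlib

section
/- Let H be a hypothesis class, and let P_S and P_T be probability distributions over X×Y with respective marginals D_S and D_T over X. For every probability distribution ρ over H: R_{P_T}(G_ρ) ≤ R_{P_S}(G_ρ) + (1/2)·dis_ρ(D_S,D_T) + λ_ρ, where λ_ρ = | e_{P_T}(G_ρ,G_ρ) − e_{P_S}(G_ρ,G_ρ) |. -/
open MeasureTheory
open scoped ENNReal

noncomputable section

variable {H X : Type*} [MeasurableSpace H] [MeasurableSpace X]

/-- Disagreement indicator `1[h(x) ≠ h'(x)]` for a pair of classifiers. -/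
def dAgree (f : H → X → Bool) (hh : H × H) (x : X) : ℝ :=
  if f hh.1 x = f hh.2 x then 0 else 1

/-- Expected disagreement `R_D(Gρ,Gρ) = E_{(h,h')∼ρ×ρ} E_{x∼D} 1[h(x)≠h'(x)]`. -/
def expDis (f : H → X → Bool) (ρ : Measure H) (D : Measure X) : ℝ :=
  ∫ hh : H × H, ∫ x, dAgree f hh x ∂D ∂(ρ.prod ρ)

/-- Empirical disagreement `(1/m) Σ_i E_{(h,h')∼ρ×ρ} 1[h(x_i)≠h'(x_i)]`. -/
def empDis (f : H → X → Bool) (ρ : Measure H) {m : ℕ} (s : Fin m → X) : ℝ :=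
  (1 / (m : ℝ)) * ∑ i, ∫ hh : H × H, dAgree f hh (s i) ∂(ρ.prod ρ)

/-- Kullback-Leibler divergence `KL(ρ‖π) = E_{h∼ρ} ln (dρ/dπ (h))`. -/
def KLd (ρ π : Measure H) : ℝ := ∫ h, Real.log ((ρ.rnDeriv π h).toReal) ∂ρ

/-- Error indicator `1[h(x) ≠ y]` on a labeled example. -/
def errInd (f : H → X → Bool) (h : H) (z : X × Bool) : ℝ :=
  if f h z.1 = z.2 then 0 else 1

/-- Gibbs risk `R_P(Gρ) = E_{h∼ρ} E_{(x,y)∼P} 1[h(x)≠y]`. -/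
def gibbsRisk (f : H → X → Bool) (ρ : Measure H) (P : Measure (X × Bool)) : ℝ :=
  ∫ h, ∫ z, errInd f h z ∂P ∂ρ

/-- Expected joint error `e_P(Gρ,Gρ) = E_{(h,h')∼ρ×ρ} E_{(x,y)∼P} 1[h(x)≠y]·1[h'(x)≠y]`. -/
def jointErr (f : H → X → Bool) (ρ : Measure H) (P : Measure (X × Bool)) : ℝ :=
  ∫ hh : H × H, ∫ z, errInd f hh.1 z * errInd f hh.2 z ∂P ∂(ρ.prod ρ)

/-- Empirical Gibbs risk `(1/m) Σ_i E_{h∼ρ} 1[h(x_i)≠y_i]`. -/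
def empGibbs (f : H → X → Bool) (ρ : Measure H) {m : ℕ} (s : Fin m → X × Bool) : ℝ :=
  (1 / (m : ℝ)) * ∑ i, ∫ h, errInd f h (s i) ∂ρ

/-!
For binary labels, `1[h(x)≠y] + 1[h'(x)≠y] = 1[h(x)≠h'(x)] + 2·1[h(x)≠y]·1[h'(x)≠y]`.
Averaging over `(x,y) ∼ P` and `(h,h') ∼ ρ×ρ`, whose two marginals are both `ρ`, gives the
exact decomposition `R_P(G_ρ) = ½ R_D(G_ρ,G_ρ) + e_P(G_ρ,G_ρ)`. The bound is the difference of this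
identity for `P_T` and `P_S`, each difference on the right bounded by its absolute value.
-/

section Indicators

variable {α β : Type*} {f : α → β → Bool}

lemma errInd_add_errInd (hh : α × α) (z : β × Bool) :
    errInd f hh.1 z + errInd f hh.2 z
      = dAgree f hh z.1 + 2 * (errInd f hh.1 z * errInd f hh.2 z) := by
  unfold errInd dAgree
  cases f hh.1 z.1 <;> cases f hh.2 z.1 <;> cases z.2 <;> norm_num

lemma norm_errInd_le_one (h : α) (z : β × Bool) : ‖errInd f h z‖ ≤ 1 := by
  unfold errInd; split <;> norm_num

lemma norm_errInd_mul_errInd_le_one (hh : α × α) (z : β × Bool) :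
    ‖errInd f hh.1 z * errInd f hh.2 z‖ ≤ 1 := by
  rw [norm_mul]
  exact mul_le_one₀ (norm_errInd_le_one _ _) (norm_nonneg _) (norm_errInd_le_one _ _)

lemma norm_dAgree_le_one (hh : α × α) (x : β) : ‖dAgree f hh x‖ ≤ 1 := by
  unfold dAgree; split <;> norm_num

end Indicators

lemma integrable_integral_prod_right_of_norm_le {α β E : Type*} [MeasurableSpace α]
    [MeasurableSpace β] [NormedAddCommGroup E] [NormedSpace ℝ E] {μ : Measure α}
    {ν : Measure β} [IsFiniteMeasure μ] [IsFiniteMeasure ν] {F : α × β → E}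
    (hF : StronglyMeasurable F) {C : ℝ} (hC : ∀ p, ‖F p‖ ≤ C) :
    Integrable (fun x => ∫ y, F (x, y) ∂ν) μ :=
  (Integrable.of_bound hF.aestronglyMeasurable C (ae_of_all _ hC)).integral_prod_left

section GibbsDecomposition

variable {f : H → X → Bool}

lemma measurable_errInd (hf : Measurable (Function.uncurry f)) :
    Measurable (fun p : H × (X × Bool) => errInd f p.1 p.2) :=
  Measurable.ite (measurableSet_eq_fun (hf.comp (measurable_fst.prodMk measurable_snd.fst))
    measurable_snd.snd) measurable_const measurable_const

lemma measurable_errInd_mul_errInd (hf : Measurable (Function.uncurry f)) :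
    Measurable (fun p : (H × H) × (X × Bool) => errInd f p.1.1 p.2 * errInd f p.1.2 p.2) :=
  ((measurable_errInd hf).comp (measurable_fst.fst.prodMk measurable_snd)).mul
    ((measurable_errInd hf).comp (measurable_fst.snd.prodMk measurable_snd))

lemma measurable_dAgree (hf : Measurable (Function.uncurry f)) :
    Measurable (fun p : (H × H) × X => dAgree f p.1 p.2) :=
  Measurable.ite (measurableSet_eq_fun (hf.comp (measurable_fst.fst.prodMk measurable_snd))
    (hf.comp (measurable_fst.snd.prodMk measurable_snd))) measurable_const measurable_const

lemma integral_errInd_add_integral_errInd (hf : Measurable (Function.uncurry f))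
    (P : Measure (X × Bool)) [IsFiniteMeasure P] (hh : H × H) :
    ∫ z, errInd f hh.1 z ∂P + ∫ z, errInd f hh.2 z ∂P
      = ∫ x, dAgree f hh x ∂(P.map Prod.fst)
        + 2 * ∫ z, errInd f hh.1 z * errInd f hh.2 z ∂P := by
  have integrable_errInd (h : H) : Integrable (errInd f h) P :=
    .of_bound ((measurable_errInd hf).comp measurable_prodMk_left).aestronglyMeasurable 1
      (ae_of_all _ (norm_errInd_le_one h))
  have measurable_dAgree_hh : Measurable (dAgree f hh) :=
    (measurable_dAgree hf).comp measurable_prodMk_left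
  have integrable_dAgree : Integrable (fun z => dAgree f hh z.1) P :=
    .of_bound (measurable_dAgree_hh.comp measurable_fst).aestronglyMeasurable 1
      (ae_of_all _ fun z => norm_dAgree_le_one hh z.1)
  have integrable_mul : Integrable (fun z => errInd f hh.1 z * errInd f hh.2 z) P :=
    .of_bound ((measurable_errInd_mul_errInd hf).comp measurable_prodMk_left).aestronglyMeasurable
      1 (ae_of_all _ (norm_errInd_mul_errInd_le_one hh))
  rw [integral_map measurable_fst.aemeasurable measurable_dAgree_hh.aestronglyMeasurable,
    ← integral_const_mul, ← integral_add (integrable_errInd _) (integrable_errInd _),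
    ← integral_add integrable_dAgree (integrable_mul.const_mul 2)]
  exact integral_congr_ae (ae_of_all _ (errInd_add_errInd hh))

theorem gibbsRisk_eq_half_expDis_add_jointErr (hf : Measurable (Function.uncurry f))
    (P : Measure (X × Bool)) [IsFiniteMeasure P] (ρ : Measure H) [IsProbabilityMeasure ρ] :
    gibbsRisk f ρ P = 1 / 2 * expDis f ρ (P.map Prod.fst) + jointErr f ρ P := by
  have integrable_risk : Integrable (fun h => ∫ z, errInd f h z ∂P) ρ :=
    integrable_integral_prod_right_of_norm_le (measurable_errInd hf).stronglyMeasurable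
      fun _ => norm_errInd_le_one _ _
  have integrable_dis :
      Integrable (fun hh => ∫ x, dAgree f hh x ∂(P.map Prod.fst)) (ρ.prod ρ) :=
    integrable_integral_prod_right_of_norm_le (measurable_dAgree hf).stronglyMeasurable
      fun _ => norm_dAgree_le_one _ _
  have integrable_joint :
      Integrable (fun hh => ∫ z, errInd f hh.1 z * errInd f hh.2 z ∂P) (ρ.prod ρ) :=
    integrable_integral_prod_right_of_norm_le (measurable_errInd_mul_errInd hf).stronglyMeasurable
      fun _ => norm_errInd_mul_errInd_le_one _ _
  have two_mul_gibbsRisk :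
      2 * gibbsRisk f ρ P = expDis f ρ (P.map Prod.fst) + 2 * jointErr f ρ P :=
    calc 2 * gibbsRisk f ρ P
        = ∫ hh, (∫ z, errInd f hh.1 z ∂P + ∫ z, errInd f hh.2 z ∂P) ∂(ρ.prod ρ) := by
          rw [integral_add (integrable_risk.comp_fst ρ) (integrable_risk.comp_snd ρ),
            integral_fun_fst (fun h => ∫ z, errInd f h z ∂P),
            integral_fun_snd (fun h => ∫ z, errInd f h z ∂P)]
          simp [gibbsRisk, two_mul]
      _ = expDis f ρ (P.map Prod.fst) + 2 * jointErr f ρ P := by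
          simp_rw [integral_errInd_add_integral_errInd hf P]
          rw [integral_add integrable_dis (integrable_joint.const_mul 2), integral_const_mul]
          rfl
  linarith

end GibbsDecomposition

/-- Theorem 9 (domain adaptation bound for the Gibbs classifier):
`R_{P_T}(Gρ) ≤ R_{P_S}(Gρ) + (1/2) dis_ρ(D_S,D_T) + λ_ρ`. -/
theorem da_bound_gibbs
    (f : H → X → Bool) (hf : Measurable (Function.uncurry f))
    (PS PT : Measure (X × Bool)) [IsProbabilityMeasure PS] [IsProbabilityMeasure PT]
    (ρ : Measure H) [IsProbabilityMeasure ρ] :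
    gibbsRisk f ρ PT
      ≤ gibbsRisk f ρ PS
        + (1 / 2) * |expDis f ρ (PT.map Prod.fst) - expDis f ρ (PS.map Prod.fst)|
        + |jointErr f ρ PT - jointErr f ρ PS| := by
  rw [gibbsRisk_eq_half_expDis_add_jointErr hf PT, gibbsRisk_eq_half_expDis_add_jointErr hf PS]
  have := le_abs_self (expDis f ρ (PT.map Prod.fst) - expDis f ρ (PS.map Prod.fst))
  have := le_abs_self (jointErr f ρ PT - jointErr f ρ PS)
  linarith
end
end

section
/- For all real numbers a, b ∈ [−1,+1], the inequality kl( (1+|a|)/2 ‖ (1+|b|)/2 ) ≤ kl( (1+a)/2 ‖ (1+b)/2 ) holds, where the values are taken in the extended nonnegative reals. -/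
/-!
Replacing `(a, b)` by `(-a, -b)` replaces `(q, p)` by `(1 - q, 1 - p)`, which leaves `kl(q‖p)`
unchanged, so we may assume `a ≥ 0`. If also `b ≥ 0` there is nothing to prove; otherwise
`p = (1 + b)/2 ≤ 1/2 ≤ q` and the claim is `kl(q‖1-p) ≤ kl(q‖p)`, which holds because
`kl(q‖p) - kl(q‖1-p) = (2q - 1) log ((1 - p)/p) ≥ 0`.
-/

open scoped ENNReal

noncomputable section

/-- Binary Kullback-Leibler divergence `kl(q‖p)`, valued in `[0,∞]`, with the
conventions `0·ln(0/p) = 0` and `q·ln(q/0) = +∞` for `q > 0`. -/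
def klBin (q p : ℝ) : ℝ≥0∞ :=
  if (p = 0 ∧ q ≠ 0) ∨ (p = 1 ∧ q ≠ 1) then ⊤
  else ENNReal.ofReal (q * Real.log (q / p) + (1 - q) * Real.log ((1 - q) / (1 - p)))

lemma klBin_one_sub_one_sub (q p : ℝ) : klBin (1 - q) (1 - p) = klBin q p := by
  have hcond : ((1 - p = 0 ∧ 1 - q ≠ 0) ∨ (1 - p = 1 ∧ 1 - q ≠ 1)) ↔
      ((p = 1 ∧ q ≠ 1) ∨ (p = 0 ∧ q ≠ 0)) := by
    simp only [sub_eq_zero, eq_comm (a := (1 : ℝ)), ne_eq, sub_eq_self]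
  rw [klBin, klBin, if_congr (hcond.trans or_comm) rfl rfl, sub_sub_cancel, sub_sub_cancel,
    add_comm]

lemma Real.mul_log_div_eq_add {y z : ℝ} (hy : y ≠ 0) (hz : z ≠ 0) (x : ℝ) :
    x * Real.log (x / y) = x * Real.log (x / z) + x * Real.log (z / y) := by
  rcases eq_or_ne x 0 with rfl | hx
  · simp
  · rw [Real.log_div hx hy, Real.log_div hx hz, Real.log_div hz hy]
    ring

lemma klBin_of_pos_of_lt_one {p : ℝ} (hp0 : 0 < p) (hp1 : p < 1) (q : ℝ) :
    klBin q p = ENNReal.ofReal (q * Real.log (q / p) + (1 - q) * Real.log ((1 - q) / (1 - p))) :=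
  if_neg (by rintro (⟨rfl, -⟩ | ⟨rfl, -⟩) <;> simp_all)

lemma klBin_one_sub_right_le {q p : ℝ} (hq : 1 / 2 ≤ q) (hp0 : 0 ≤ p)
    (hp_half : p ≤ 1 / 2) :
    klBin q (1 - p) ≤ klBin q p := by
  rcases hp0.eq_or_lt with rfl | hp
  · rw [show klBin q 0 = ⊤ from if_pos (Or.inl ⟨rfl, by linarith⟩)]
    exact le_top
  have hp1 : 0 < 1 - p := by linarith
  rw [klBin_of_pos_of_lt_one hp1 (by linarith), klBin_of_pos_of_lt_one hp (by linarith),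
    sub_sub_cancel]
  apply ENNReal.ofReal_le_ofReal
  have hgap : 0 ≤ (2 * q - 1) * Real.log ((1 - p) / p) :=
    mul_nonneg (by linarith) (Real.log_nonneg ((one_le_div hp).2 (by linarith)))
  linear_combination -Real.mul_log_div_eq_add hp.ne' hp1.ne' q
    + Real.mul_log_div_eq_add hp.ne' hp1.ne' (1 - q) + hgap

lemma klBin_abs_right_le {a b : ℝ} (ha : 0 ≤ a) (hb : -1 ≤ b) :
    klBin ((1 + a) / 2) ((1 + |b|) / 2) ≤ klBin ((1 + a) / 2) ((1 + b) / 2) := by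
  rcases le_total 0 b with hb0 | hb0
  · rw [abs_of_nonneg hb0]
  · rw [abs_of_nonpos hb0, show (1 + -b) / 2 = 1 - (1 + b) / 2 by ring]
    exact klBin_one_sub_right_le (by linarith) (by linarith) (by linarith)

lemma klBin_neg_neg (a b : ℝ) :
    klBin ((1 + -a) / 2) ((1 + -b) / 2) = klBin ((1 + a) / 2) ((1 + b) / 2) := by
  rw [← klBin_one_sub_one_sub]
  congr 1 <;> ring

theorem klBin_abs_le_general (a b : ℝ) (hb : b ∈ Set.Icc (-1 : ℝ) 1) :
    klBin ((1 + |a|) / 2) ((1 + |b|) / 2) ≤ klBin ((1 + a) / 2) ((1 + b) / 2) := by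
  rcases le_total 0 a with ha | ha
  · rw [abs_of_nonneg ha]
    exact klBin_abs_right_le ha hb.1
  · have h := klBin_abs_right_le (neg_nonneg.2 ha) (neg_le_neg hb.2)
    rwa [abs_neg, klBin_neg_neg, ← abs_of_nonpos ha] at h

/-- Lemma 25: for all `a, b ∈ [−1,1]`,
`kl((1+|a|)/2 ‖ (1+|b|)/2) ≤ kl((1+a)/2 ‖ (1+b)/2)`. -/
theorem klBin_abs_le (a b : ℝ) (ha : a ∈ Set.Icc (-1 : ℝ) 1) (hb : b ∈ Set.Icc (-1 : ℝ) 1) :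
    klBin ((1 + |a|) / 2) ((1 + |b|) / 2) ≤ klBin ((1 + a) / 2) ((1 + b) / 2) :=
  klBin_abs_le_general a b hb
end
end

section
/- Let w ∈ ℝ^d and let ρ_w be the Gaussian probability measure on ℝ^d with mean w and identity covariance (the product of d standard normal distributions shifted by w). Let P be a probability distribution over ℝ^d × {−1,+1} such that x ≠ 0 P-almost surely. Then the Gibbs risk of ρ_w over the family of linear classifiers h_{w'}(x) = sign(w'·x) satisfies R_P(G_{ρ_w}) = E_{(x,y)∼P} Φ( y·(w·x)/‖x‖ ), where Φ(a) = Pr_{t∼N(0,1)}(t ≥ a) is the standard Gaussian upper tail probability. -/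
/-!
For fixed `(x, y)` with `x ≠ 0` and `y = ±1`, the margin `y (w'·x) = ∑ᵢ w'ᵢ (y xᵢ)` of
`w' ∼ N(w, I)` is a sum of independent Gaussians, hence has law `N(y (w·x), ‖x‖²)`; so the
classifier `w'` errs on `(x, y)` with probability `Φ(y (w·x) / ‖x‖)`. Fubini exchanges the
expectations over `w'` and over `P`.
-/

open MeasureTheory ProbabilityTheory

noncomputable section

/-- The standard Gaussian upper tail probability `Φ(a) = Pr_{t∼N(0,1)}(t ≥ a)`. -/
def gaussTail (a : ℝ) : ℝ := ((gaussianReal 0 1) {t : ℝ | a ≤ t}).toReal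

open Set
open scoped NNReal

lemma integral_integral_ite_swap {α β : Type*} [MeasurableSpace α] [MeasurableSpace β]
    (μ : Measure α) (ν : Measure β) [IsFiniteMeasure μ] [IsFiniteMeasure ν]
    (p : α → β → Prop) [∀ a b, Decidable (p a b)]
    (hp : MeasurableSet {q : α × β | p q.1 q.2}) :
    ∫ a, ∫ b, (if p a b then (1 : ℝ) else 0) ∂ν ∂μ = ∫ b, μ.real {a | p a b} ∂ν := by
  have hind : Function.uncurry (fun a b => if p a b then (1 : ℝ) else 0)
      = {q : α × β | p q.1 q.2}.indicator 1 := by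
    ext q; simp [indicator_apply, Function.uncurry]
  rw [integral_integral_swap (by rw [hind]; exact (integrable_const 1).indicator hp)]
  refine integral_congr_ae (ae_of_all _ fun b => ?_)
  have hpb : MeasurableSet {a | p a b} := measurable_prodMk_right hp
  simp [← integral_indicator_one hpb, indicator_apply]

lemma gaussianReal_Iic_zero (m : ℝ) {v : ℝ≥0} (hv : v ≠ 0) :
    gaussianReal m v (Iic 0) = gaussianReal 0 1 (Ici (m / √v)) := by
  have hσ : 0 < √(v : ℝ) := Real.sqrt_pos.2 (by positivity)
  have hlaw : (gaussianReal 0 1).map (fun t => m - √v * t) = gaussianReal m v := by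
    rw [show (fun t => m - √v * t) = (m - ·) ∘ (√v * ·) from rfl,
      ← Measure.map_map (by fun_prop) (by fun_prop), gaussianReal_map_const_mul,
      gaussianReal_map_const_sub]
    congr 1
    · simp
    · ext; simp [Real.sq_sqrt v.coe_nonneg]
  rw [← hlaw, Measure.map_apply (by fun_prop) measurableSet_Iic]
  congr 1
  ext t
  simp [div_le_iff₀' hσ]

section Pi

variable {ι : Type*} [Fintype ι]

lemma map_sum_pi_gaussianReal (m : ι → ℝ) (v : ι → ℝ≥0) :
    (Measure.pi fun i => gaussianReal (m i) (v i)).map (fun p => ∑ i, p i)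
      = gaussianReal (∑ i, m i) (∑ i, v i) := by
  refine Measure.ext_of_charFun (funext fun t => ?_)
  rw [charFun_map_sum_pi_eq_prod, Finset.prod_apply]
  simp only [charFun_gaussianReal, ← Complex.exp_sum]
  push_cast
  congr 1
  rw [Finset.mul_sum, Finset.sum_mul, Finset.sum_mul, Finset.sum_div, ← Finset.sum_sub_distrib]

lemma map_pi_gaussianReal_sum_mul (m : ι → ℝ) (v : ι → ℝ≥0) (x : ι → ℝ) :
    (Measure.pi fun i => gaussianReal (m i) (v i)).map (fun p => ∑ i, p i * x i)
      = gaussianReal (∑ i, x i * m i) (∑ i, .mk (x i ^ 2) (sq_nonneg _) * v i) := by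
  have hscale : (Measure.pi fun i => gaussianReal (m i) (v i)).map (fun p i => p i * x i)
      = Measure.pi fun i => gaussianReal (x i * m i) (.mk (x i ^ 2) (sq_nonneg _) * v i) := by
    rw [Measure.pi_map_pi (f := fun i t => t * x i) (fun i => by fun_prop)]
    simp_rw [gaussianReal_map_mul_const]
  rw [← map_sum_pi_gaussianReal, ← hscale, Measure.map_map (by fun_prop) (by fun_prop)]
  rfl

lemma pi_gaussianReal_halfspace (w x : ι → ℝ) (hx : x ≠ 0)
    {y : ℝ} (hy : y ^ 2 = 1) :
    (Measure.pi fun i => gaussianReal (w i) 1) {w' | y * ∑ i, w' i * x i ≤ 0}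
      = gaussianReal 0 1 (Ici (y * (∑ i, w i * x i) / √(∑ i, x i ^ 2))) := by
  have hset : {w' : ι → ℝ | y * ∑ i, w' i * x i ≤ 0}
      = (fun w' => ∑ i, w' i * (y * x i)) ⁻¹' Iic 0 := by
    ext w'
    simp [Finset.mul_sum, mul_left_comm]
  have hvar : ((∑ i, .mk ((y * x i) ^ 2) (sq_nonneg _) * 1 : ℝ≥0) : ℝ) = ∑ i, x i ^ 2 := by
    push_cast
    simp [mul_pow, hy]
  have hpos : 0 < ∑ i, x i ^ 2 := by
    obtain ⟨i, hi⟩ := Function.ne_iff.mp hx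
    exact Finset.sum_pos' (fun j _ => sq_nonneg _) ⟨i, Finset.mem_univ i, sq_pos_iff.2 hi⟩
  rw [hset, ← Measure.map_apply (by fun_prop) measurableSet_Iic, map_pi_gaussianReal_sum_mul,
    gaussianReal_Iic_zero _ (by rw [← NNReal.coe_ne_zero, hvar]; exact hpos.ne'), hvar,
    Finset.mul_sum]
  congr 3
  exact Finset.sum_congr rfl fun i _ => by ring

end Pi

/-- Gibbs risk of the isotropic Gaussian posterior `ρ_w` (mean `w`, identity
covariance) over linear classifiers `h_{w'}(x) = sign(w'·x)`:
`R_P(G_{ρ_w}) = E_{(x,y)∼P} Φ(y·(w·x)/‖x‖)`. -/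
theorem gibbs_risk_gaussian_linear
    (d : ℕ) (w : Fin d → ℝ)
    (P : Measure ((Fin d → ℝ) × ℝ)) [IsProbabilityMeasure P]
    (hy : ∀ᵐ z ∂P, z.2 = 1 ∨ z.2 = -1)
    (hx : ∀ᵐ z ∂P, z.1 ≠ 0) :
    (∫ w' : Fin d → ℝ,
        ∫ z, (if z.2 * (∑ i, w' i * z.1 i) ≤ 0 then (1 : ℝ) else 0) ∂P
      ∂(Measure.pi fun i => gaussianReal (w i) 1))
      = ∫ z, gaussTail (z.2 * (∑ i, w i * z.1 i)
                          / Real.sqrt (∑ i, (z.1 i) ^ 2)) ∂P := by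
  rw [integral_integral_ite_swap _ _
    (fun (w' : Fin d → ℝ) (z : (Fin d → ℝ) × ℝ) => z.2 * ∑ i, w' i * z.1 i ≤ 0)
    (measurableSet_le (by fun_prop) (by fun_prop))]
  refine integral_congr_ae ?_
  filter_upwards [hy, hx] with z hzy hzx
  have hy2 : z.2 ^ 2 = 1 := by rcases hzy with h | h <;> simp [h]
  exact congrArg ENNReal.toReal (pi_gaussianReal_halfspace w z.1 hzx hy2)
end
end
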